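/- Let (X,S,T) be a distal minimal system with commuting transformations S and T. Then R_{S,T}(X) is a closed equivalence relation on X. -/

import Mathlib

/-- The `n`-th integer iterate of a homeomorphism, as a function. -/
def hpow {X : Type*} [TopologicalSpace X] (S : X ≃ₜ X) (n : ℤ) : X → X :=
  ⇑(S.toEquiv ^ n)

variable {X : Type*} [TopologicalSpace X]

def cube (S T : X ≃ₜ X) : Set (X × X × X × X) :=
  closure {p | ∃ (x : X) (n m : ℤ),
    p = (x, hpow S n x, hpow T m x, hpow S n (hpow T m x))}

def cube2 (S : X ≃ₜ X) : Set (X × X) :=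
  closure {p | ∃ (x : X) (n : ℤ), p = (x, hpow S n x)}

def relS (S T : X ≃ₜ X) : Set (X × X) :=
  {p | ∃ a : X, (p.1, p.2, a, a) ∈ cube S T}

def relT (S T : X ≃ₜ X) : Set (X × X) :=
  {p | ∃ b : X, (p.1, b, p.2, b) ∈ cube S T}

def minimalST (S T : X ≃ₜ X) : Prop :=
  ∀ x : X, Dense {y : X | ∃ n m : ℤ, y = hpow S n (hpow T m x)}

def minimal1 (S : X ≃ₜ X) : Prop :=
  ∀ x : X, Dense {y : X | ∃ n : ℤ, y = hpow S n x}

def distalST {Y : Type*} [MetricSpace Y] (S T : Y ≃ₜ Y) : Prop :=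
  ∀ x y : Y, x ≠ y → ∃ ε > 0, ∀ n m : ℤ,
    ε ≤ dist (hpow S n (hpow T m x)) (hpow S n (hpow T m y))

def proxT {Y : Type*} [MetricSpace Y] (T : Y ≃ₜ Y) : Set (Y × Y) :=
  {p | ∀ ε > 0, ∃ m : ℤ, dist (hpow T m p.1) (hpow T m p.2) < ε}


/-!
The face group of `cube S T` (apply `g` at every vertex, and in addition `S^c` on one `S`-face and
`T^d` on one `T`-face) is a distal family of maps, so its closure in the function space is a group:
an idempotent of a compact semigroup of injective maps is the identity. By minimality, `cube S T`
is the orbit closure of a diagonal point, hence any two of its points are related by an element of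
this Ellis group. Such an element is a product map `q₀ × q₁ × q₂ × q₃`, and its collapses
`q₀ × q₀ × q₂ × q₂` and `q₀ × q₀ × q₀ × q₀` stay in the group. Transporting with these gives the
gluing rule `(ξ₁, η₁, ξ₂, η₂), (η₁, ζ₁, η₂, ζ₂) ∈ cube S T ⟹ (ξ₁, ζ₁, ξ₂, ζ₂) ∈ cube S T` and the
transitivity of `(x, y, y, y) ∈ cube S T`, which is how `R_{S,T}` is characterised.
-/

open Function Set

section EllisGroup

variable {W : Type*} [TopologicalSpace W] {M : Set (W → W)}

theorem comp_mem_closure (hcomp : ∀ f ∈ M, ∀ g ∈ M, f ∘ g ∈ M)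
    (hcont : ∀ f ∈ M, Continuous f) {u v : W → W} (hu : u ∈ closure M) (hv : v ∈ closure M) :
    u ∘ v ∈ closure M := by
  have hv' : ∀ f ∈ M, f ∘ v ∈ closure M := fun f hf =>
    map_mem_closure (continuous_pi fun x => (hcont f hf).comp (continuous_apply x)) hv (hcomp f hf)
  rw [← closure_closure (s := M)]
  exact map_mem_closure (f := (· ∘ v)) (continuous_pi fun x => continuous_apply (v x)) hu hv'

theorem exists_leftInverse_mem_closure [CompactSpace W] [T2Space W]
    (hcomp : ∀ f ∈ M, ∀ g ∈ M, f ∘ g ∈ M) (hcont : ∀ f ∈ M, Continuous f)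
    (hinj : ∀ u ∈ closure M, Injective u) {p : W → W} (hp : p ∈ closure M) :
    ∃ q ∈ closure M, LeftInverse q p := by
  let _ : TopologicalSpace (Function.End W) := inferInstanceAs (TopologicalSpace (W → W))
  have _ : T2Space (Function.End W) := inferInstanceAs (T2Space (W → W))
  have hright : ∀ r : W → W, Continuous fun f : W → W => f ∘ r := fun r =>
    continuous_pi fun x => continuous_apply (r x)
  obtain ⟨_, ⟨q, hq, rfl⟩, hidem⟩ := @exists_idempotent_in_compact_subsemigroup
    (Function.End W) _ _ ‹_› hright ((· ∘ p) '' closure M) ⟨p ∘ p, p, hp, rfl⟩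
    (isClosed_closure.isCompact.image (hright p))
    (by
      rintro _ ⟨f, hf, rfl⟩ _ ⟨g, hg, rfl⟩
      exact ⟨f ∘ p ∘ g, comp_mem_closure hcomp hcont hf (comp_mem_closure hcomp hcont hp hg), rfl⟩)
  exact ⟨q, hq, fun x => hinj _ (comp_mem_closure hcomp hcont hq hp) (congrFun hidem x)⟩

theorem exists_inverse_mem_closure [CompactSpace W] [T2Space W]
    (hcomp : ∀ f ∈ M, ∀ g ∈ M, f ∘ g ∈ M) (hcont : ∀ f ∈ M, Continuous f)
    (hinj : ∀ u ∈ closure M, Injective u) {p : W → W} (hp : p ∈ closure M) :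
    ∃ q ∈ closure M, LeftInverse q p ∧ RightInverse q p := by
  obtain ⟨q, hq, hqp⟩ := exists_leftInverse_mem_closure hcomp hcont hinj hp
  obtain ⟨r, -, hrq⟩ := exists_leftInverse_mem_closure hcomp hcont hinj hq
  exact ⟨q, hq, hqp, hrq.eq_rightInverse hqp ▸ hrq⟩

theorem closure_image_eval [CompactSpace W] [T2Space W] (M : Set (W → W)) (z : W) :
    closure ((· z) '' M) = (· z) '' closure M :=
  (image_closure_of_isCompact isClosed_closure.isCompact (continuous_apply z).continuousOn).symm

theorem mapsTo_closure_image_eval [CompactSpace W] [T2Space W]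
    (hcomp : ∀ f ∈ M, ∀ g ∈ M, f ∘ g ∈ M) (hcont : ∀ f ∈ M, Continuous f)
    {u : W → W} (hu : u ∈ closure M) (z : W) :
    MapsTo u (closure ((· z) '' M)) (closure ((· z) '' M)) := by
  rw [closure_image_eval]
  rintro _ ⟨v, hv, rfl⟩
  exact ⟨u ∘ v, comp_mem_closure hcomp hcont hu hv, rfl⟩

theorem exists_mem_closure_apply_eq [CompactSpace W] [T2Space W]
    (hcomp : ∀ f ∈ M, ∀ g ∈ M, f ∘ g ∈ M) (hcont : ∀ f ∈ M, Continuous f)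
    (hinj : ∀ u ∈ closure M, Injective u) {z P B : W}
    (hP : P ∈ closure ((· z) '' M)) (hB : B ∈ closure ((· z) '' M)) :
    ∃ u ∈ closure M, u P = B := by
  rw [closure_image_eval] at hP hB
  obtain ⟨v, hv, rfl⟩ := hP
  obtain ⟨w, hw, rfl⟩ := hB
  obtain ⟨v', hv', hv'v, -⟩ := exists_inverse_mem_closure hcomp hcont hinj hv
  exact ⟨w ∘ v', comp_mem_closure hcomp hcont hw hv', congrArg w (hv'v z)⟩

end EllisGroup

theorem injective_of_mem_closure {W : Type*} [MetricSpace W] {M : Set (W → W)}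
    (hdist : ∀ x y, x ≠ y → ∃ ε > 0, ∀ f ∈ M, ε ≤ dist (f x) (f y))
    {u : W → W} (hu : u ∈ closure M) : Injective u := by
  intro x y hxy
  by_contra hne
  obtain ⟨ε, hε, hM⟩ := hdist x y hne
  have hclosed : IsClosed {f : W → W | ε ≤ dist (f x) (f y)} :=
    isClosed_le continuous_const ((continuous_apply x).dist (continuous_apply y))
  have : ε ≤ dist (u x) (u y) := closure_minimal hM hclosed hu
  rw [hxy, dist_self] at this
  exact hε.not_ge this

section Shift

variable {X : Type*} [TopologicalSpace X] {S T : X ≃ₜ X}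

theorem hpow_eq_coe_zpow (S : X ≃ₜ X) (n : ℤ) : hpow S n = ⇑(S ^ n) :=
  let toPerm : (X ≃ₜ X) →* Equiv.Perm X :=
    { toFun := Homeomorph.toEquiv, map_one' := rfl, map_mul' := fun _ _ => rfl }
  congrArg DFunLike.coe (map_zpow toPerm S n).symm

theorem hpow_zero_apply (S : X ≃ₜ X) (x : X) : hpow S 0 x = x := by
  simp [hpow_eq_coe_zpow]

theorem hpow_neg_apply_hpow (S : X ≃ₜ X) (n : ℤ) (x : X) : hpow S (-n) (hpow S n x) = x := by
  simp only [hpow_eq_coe_zpow]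
  rw [← Homeomorph.mul_apply, ← zpow_add, neg_add_cancel, zpow_zero, Homeomorph.one_apply]

def shift (S T : X ≃ₜ X) (a b : ℤ) : X ≃ₜ X := S ^ a * T ^ b

theorem hpow_apply_hpow (n m : ℤ) (x : X) : hpow S n (hpow T m x) = shift S T n m x := by
  simp [hpow_eq_coe_zpow, shift]

theorem shift_apply_shift (hc : Commute S T) (a b c d : ℤ) (x : X) :
    shift S T a b (shift S T c d x) = shift S T (a + c) (b + d) x := by
  rw [← Homeomorph.mul_apply, shift, shift, shift, (hc.zpow_zpow c b).symm.mul_mul_mul_comm,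
    ← zpow_add, ← zpow_add]

end Shift

section Map4

variable {X : Type*}

def map4 (f₀ f₁ f₂ f₃ : X → X) : X × X × X × X → X × X × X × X :=
  Prod.map f₀ (Prod.map f₁ (Prod.map f₂ f₃))

theorem leftInverse_of_map4 {q₀ q₁ q₂ q₃ r₀ r₁ r₂ r₃ : X → X}
    (h : LeftInverse (map4 r₀ r₁ r₂ r₃) (map4 q₀ q₁ q₂ q₃)) :
    LeftInverse r₀ q₀ ∧ LeftInverse r₁ q₁ ∧ LeftInverse r₂ q₂ ∧ LeftInverse r₃ q₃ :=
  ⟨fun x => congrArg (·.1) (h (x, x, x, x)), fun x => congrArg (·.2.1) (h (x, x, x, x)),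
    fun x => congrArg (·.2.2.1) (h (x, x, x, x)), fun x => congrArg (·.2.2.2) (h (x, x, x, x))⟩

end Map4

section FaceMaps

variable {X : Type*} [TopologicalSpace X] {S T : X ≃ₜ X}

def shiftMaps (S T : X ≃ₜ X) : Set (X → X) := {f | ∃ a b : ℤ, f = ⇑(shift S T a b)}

/-- The face group of the paper, with `a' = a + c` and `b' = b + d`. -/
def faceMaps (S T : X ≃ₜ X) : Set (X × X × X × X → X × X × X × X) :=
  {F | ∃ a a' b b' : ℤ,
    F = map4 ⇑(shift S T a b) ⇑(shift S T a' b) ⇑(shift S T a b') ⇑(shift S T a' b')}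

theorem gen_eq_map4 (x : X) (n m : ℤ) :
    (x, hpow S n x, hpow T m x, hpow S n (hpow T m x)) =
      map4 ⇑(shift S T 0 0) ⇑(shift S T n 0) ⇑(shift S T 0 m) ⇑(shift S T n m) (x, x, x, x) := by
  simp [map4, shift, hpow_eq_coe_zpow]

theorem continuous_of_mem_faceMaps {F : X × X × X × X → X × X × X × X}
    (hF : F ∈ faceMaps S T) : Continuous F := by
  obtain ⟨a, a', b, b', rfl⟩ := hF
  exact (shift S T a b).continuous.prodMap ((shift S T a' b).continuous.prodMap
    ((shift S T a b').continuous.prodMap (shift S T a' b').continuous))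

theorem comp_mem_faceMaps (hc : Commute S T) :
    ∀ F ∈ faceMaps S T, ∀ G ∈ faceMaps S T, F ∘ G ∈ faceMaps S T := by
  rintro _ ⟨a, a', b, b', rfl⟩ _ ⟨c, c', d, d', rfl⟩
  refine ⟨a + c, a' + c', b + d, b' + d', funext fun ⟨x₀, x₁, x₂, x₃⟩ => ?_⟩
  simp [map4, shift_apply_shift hc]

theorem map4_mem_closure_faceMaps_dup {q₀ q₁ q₂ q₃ : X → X}
    (hq : map4 q₀ q₁ q₂ q₃ ∈ closure (faceMaps S T)) :
    map4 q₀ q₀ q₂ q₂ ∈ closure (faceMaps S T) := by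
  refine map_mem_closure (f := fun F => map4 (fun x => (F (x, x, x, x)).1)
    (fun x => (F (x, x, x, x)).1) (fun x => (F (x, x, x, x)).2.2.1)
    (fun x => (F (x, x, x, x)).2.2.1)) ?_ hq ?_
  · unfold map4 Prod.map; fun_prop
  · rintro _ ⟨a, a', b, b', rfl⟩
    exact ⟨a, a, b, b', rfl⟩

theorem map4_mem_closure_faceMaps_diag {q₀ q₁ q₂ q₃ : X → X}
    (hq : map4 q₀ q₁ q₂ q₃ ∈ closure (faceMaps S T)) :
    map4 q₀ q₀ q₀ q₀ ∈ closure (faceMaps S T) := by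
  refine map_mem_closure (f := fun F => map4 (fun x => (F (x, x, x, x)).1)
    (fun x => (F (x, x, x, x)).1) (fun x => (F (x, x, x, x)).1)
    (fun x => (F (x, x, x, x)).1)) ?_ hq ?_
  · unfold map4 Prod.map; fun_prop
  · rintro _ ⟨a, a', b, b', rfl⟩
    exact ⟨a, a, b, b, rfl⟩

theorem mapsTo_cube_of_gen {φ : X × X × X × X → X × X × X × X} (hφ : Continuous φ)
    (hgen : ∀ x n m, φ (x, hpow S n x, hpow T m x, hpow S n (hpow T m x)) ∈ cube S T) :
    MapsTo φ (cube S T) (cube S T) := fun p hp => by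
  rw [cube, ← closure_closure]
  exact map_mem_closure hφ hp (by rintro _ ⟨x, n, m, rfl⟩; exact hgen x n m)

theorem diag_mem_cube (x : X) : (x, x, x, x) ∈ cube S T := by
  have h : (x, hpow S 0 x, hpow T 0 x, hpow S 0 (hpow T 0 x)) ∈ cube S T :=
    subset_closure ⟨x, 0, 0, rfl⟩
  simpa only [hpow_zero_apply] using h

theorem swap_mem_cube {a b c d : X} (h : (a, b, c, d) ∈ cube S T) : (c, d, a, b) ∈ cube S T := by
  refine mapsTo_cube_of_gen (φ := fun p => (p.2.2.1, p.2.2.2, p.1, p.2.1)) (by fun_prop)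
    (fun x n m => ?_) h
  have h' : (hpow T m x, hpow S n (hpow T m x), hpow T (-m) (hpow T m x),
      hpow S n (hpow T (-m) (hpow T m x))) ∈ cube S T := subset_closure ⟨_, n, -m, rfl⟩
  simpa only [hpow_neg_apply_hpow] using h'

theorem collapse_mem_cube {a b c d : X} (h : (a, b, c, d) ∈ cube S T) :
    (a, a, c, c) ∈ cube S T := by
  refine mapsTo_cube_of_gen (φ := fun p => (p.1, p.1, p.2.2.1, p.2.2.1)) (by fun_prop)
    (fun x n m => ?_) h
  have h' : (x, hpow S 0 x, hpow T m x, hpow S 0 (hpow T m x)) ∈ cube S T :=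
    subset_closure ⟨x, 0, m, rfl⟩
  simpa only [hpow_zero_apply] using h'

theorem reflect_mem_cube {a b c d : X} (h : (a, b, c, d) ∈ cube S T) :
    (d, c, d, c) ∈ cube S T := by
  refine mapsTo_cube_of_gen (φ := fun p => (p.2.2.2, p.2.2.1, p.2.2.2, p.2.2.1)) (by fun_prop)
    (fun x n m => ?_) h
  set y := hpow S n (hpow T m x)
  have h' : (y, hpow S (-n) y, hpow T 0 y, hpow S (-n) (hpow T 0 y)) ∈ cube S T :=
    subset_closure ⟨y, -n, 0, rfl⟩
  simpa only [y, hpow_zero_apply, hpow_neg_apply_hpow] using h'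

theorem isClosed_relS [CompactSpace X] (S T : X ≃ₜ X) : IsClosed (relS S T) := by
  have h : relS S T =
      Prod.fst '' ((fun q : (X × X) × X => (q.1.1, q.1.2, q.2, q.2)) ⁻¹' cube S T) := by
    ext; simp [relS]
  rw [h]
  exact isClosedMap_fst_of_compactSpace _ (isClosed_closure.preimage (by fun_prop))

theorem isClosed_relT [CompactSpace X] (S T : X ≃ₜ X) : IsClosed (relT S T) := by
  have h : relT S T =
      Prod.fst '' ((fun q : (X × X) × X => (q.1.1, q.2, q.1.2, q.2)) ⁻¹' cube S T) := by
    ext; simp [relT]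
  rw [h]
  exact isClosedMap_fst_of_compactSpace _ (isClosed_closure.preimage (by fun_prop))

end FaceMaps

theorem injective_of_mem_closure_shiftMaps {X : Type*} [MetricSpace X] {S T : X ≃ₜ X}
    (hd : distalST S T) {q : X → X} (hq : q ∈ closure (shiftMaps S T)) : Injective q := by
  refine injective_of_mem_closure (fun x y hxy => ?_) hq
  obtain ⟨ε, hε, hsep⟩ := hd x y hxy
  refine ⟨ε, hε, ?_⟩
  rintro _ ⟨a, b, rfl⟩
  simpa only [hpow_apply_hpow] using hsep a b

section EllisFaceGroup

variable {X : Type*} [MetricSpace X] [CompactSpace X] {S T : X ≃ₜ X}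

theorem closure_faceMaps_subset :
    closure (faceMaps S T) ⊆ {u | ∃ q₀ ∈ closure (shiftMaps S T), ∃ q₁ ∈ closure (shiftMaps S T),
      ∃ q₂ ∈ closure (shiftMaps S T), ∃ q₃ ∈ closure (shiftMaps S T), u = map4 q₀ q₁ q₂ q₃} := by
  set C := closure (shiftMaps S T)
  have hK : IsCompact (C ×ˢ C ×ˢ C ×ˢ C) := by
    have hC : IsCompact C := isClosed_closure.isCompact
    exact hC.prod (hC.prod (hC.prod hC))
  have hmap4 : Continuous fun q : (X → X) × (X → X) × (X → X) × (X → X) =>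
      map4 q.1 q.2.1 q.2.2.1 q.2.2.2 := by
    unfold map4 Prod.map; fun_prop
  have hsub : closure (faceMaps S T) ⊆
      (fun q => map4 q.1 q.2.1 q.2.2.1 q.2.2.2) '' (C ×ˢ C ×ˢ C ×ˢ C) := by
    refine closure_minimal ?_ (hK.image hmap4).isClosed
    rintro _ ⟨a, a', b, b', rfl⟩
    exact ⟨(_, _, _, _), ⟨subset_closure ⟨a, b, rfl⟩, subset_closure ⟨a', b, rfl⟩,
      subset_closure ⟨a, b', rfl⟩, subset_closure ⟨a', b', rfl⟩⟩, rfl⟩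
  intro u hu
  obtain ⟨⟨q₀, q₁, q₂, q₃⟩, ⟨h₀, h₁, h₂, h₃⟩, rfl⟩ := hsub hu
  exact ⟨q₀, h₀, q₁, h₁, q₂, h₂, q₃, h₃, rfl⟩

theorem injective_of_mem_closure_faceMaps (hd : distalST S T)
    {u : X × X × X × X → X × X × X × X} (hu : u ∈ closure (faceMaps S T)) : Injective u := by
  obtain ⟨q₀, h₀, q₁, h₁, q₂, h₂, q₃, h₃, rfl⟩ := closure_faceMaps_subset hu
  have hinj := fun {q} => injective_of_mem_closure_shiftMaps (q := q) hd
  exact (hinj h₀).prodMap ((hinj h₁).prodMap ((hinj h₂).prodMap (hinj h₃)))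

theorem exists_inverse_mem_closure_faceMaps (hc : Commute S T) (hd : distalST S T)
    {u : X × X × X × X → X × X × X × X} (hu : u ∈ closure (faceMaps S T)) :
    ∃ v ∈ closure (faceMaps S T), LeftInverse v u ∧ RightInverse v u :=
  exists_inverse_mem_closure (comp_mem_faceMaps hc) (fun _ => continuous_of_mem_faceMaps)
    (fun _ => injective_of_mem_closure_faceMaps hd) hu

theorem cube_eq_closure_image (hc : Commute S T) (hmin : minimalST S T) (x₀ : X) :
    cube S T = closure ((· (x₀, x₀, x₀, x₀)) '' faceMaps S T) := by
  apply Subset.antisymm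
  · refine closure_minimal ?_ isClosed_closure
    rintro _ ⟨x, n, m, rfl⟩
    have hdiag : (x, x, x, x) ∈ closure ((· (x₀, x₀, x₀, x₀)) '' faceMaps S T) := by
      refine map_mem_closure (f := fun y => (y, y, y, y)) (by fun_prop) (hmin x₀ x) ?_
      rintro _ ⟨c, d, rfl⟩
      exact ⟨_, ⟨c, c, d, d, rfl⟩, by simp [map4, hpow_apply_hpow]⟩
    rw [gen_eq_map4]
    exact mapsTo_closure_image_eval (comp_mem_faceMaps hc) (fun _ => continuous_of_mem_faceMaps)
      (subset_closure ⟨0, n, 0, m, rfl⟩) _ hdiag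
  · refine closure_minimal ?_ isClosed_closure
    rintro _ ⟨F, ⟨a, a', b, b', rfl⟩, rfl⟩
    refine subset_closure ⟨shift S T a b x₀, a' - a, b' - b, ?_⟩
    rw [gen_eq_map4]
    simp [map4, shift_apply_shift hc]

theorem mapsTo_cube (hc : Commute S T) (hmin : minimalST S T)
    {u : X × X × X × X → X × X × X × X} (hu : u ∈ closure (faceMaps S T)) :
    MapsTo u (cube S T) (cube S T) := fun p hp => by
  rw [cube_eq_closure_image hc hmin p.1] at hp ⊢
  exact mapsTo_closure_image_eval (comp_mem_faceMaps hc) (fun _ => continuous_of_mem_faceMaps)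
    hu _ hp

theorem exists_mem_closure_faceMaps_apply_eq (hc : Commute S T) (hmin : minimalST S T)
    (hd : distalST S T) {P B : X × X × X × X} (hP : P ∈ cube S T) (hB : B ∈ cube S T) :
    ∃ u ∈ closure (faceMaps S T), u P = B := by
  rw [cube_eq_closure_image hc hmin P.1] at hP hB
  exact exists_mem_closure_apply_eq (comp_mem_faceMaps hc) (fun _ => continuous_of_mem_faceMaps)
    (fun _ => injective_of_mem_closure_faceMaps hd) hP hB

theorem cube_glue (hc : Commute S T) (hmin : minimalST S T) (hd : distalST S T)
    {ξ₁ η₁ ζ₁ ξ₂ η₂ ζ₂ : X} (hA : (ξ₁, η₁, ξ₂, η₂) ∈ cube S T)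
    (hB : (η₁, ζ₁, η₂, ζ₂) ∈ cube S T) : (ξ₁, ζ₁, ξ₂, ζ₂) ∈ cube S T := by
  obtain ⟨u, hu, huP⟩ :=
    exists_mem_closure_faceMaps_apply_eq hc hmin hd (collapse_mem_cube hA) hB
  obtain ⟨v, hv, hvu, huv⟩ := exists_inverse_mem_closure_faceMaps hc hd hu
  obtain ⟨q₀, -, q₁, -, q₂, -, q₃, -, rfl⟩ := closure_faceMaps_subset hu
  obtain ⟨r₀, -, r₁, -, r₂, -, r₃, -, rfl⟩ := closure_faceMaps_subset hv
  obtain ⟨hl₀, -, hl₂, -⟩ := leftInverse_of_map4 hvu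
  obtain ⟨hr₀, -, hr₂, -⟩ := leftInverse_of_map4 huv
  obtain ⟨rfl, rfl, rfl, rfl⟩ : q₀ ξ₁ = η₁ ∧ q₁ ξ₁ = ζ₁ ∧ q₂ ξ₂ = η₂ ∧ q₃ ξ₂ = ζ₂ := by
    simpa [map4] using huP
  have h := mapsTo_cube hc hmin hu (mapsTo_cube hc hmin (map4_mem_closure_faceMaps_dup hv) hA)
  simpa [map4, hl₀ ξ₁, hr₀ ξ₁, hl₂ ξ₂, hr₂ ξ₂] using h

theorem cube_trans (hc : Commute S T) (hmin : minimalST S T) (hd : distalST S T)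
    {x y z : X} (hxy : (x, y, y, y) ∈ cube S T) (hyz : (y, z, z, z) ∈ cube S T) :
    (x, z, z, z) ∈ cube S T := by
  obtain ⟨u, hu, huP⟩ := exists_mem_closure_faceMaps_apply_eq hc hmin hd (diag_mem_cube x) hyz
  obtain ⟨v, hv, hvu, huv⟩ := exists_inverse_mem_closure_faceMaps hc hd hu
  obtain ⟨q₀, -, q₁, -, q₂, -, q₃, -, rfl⟩ := closure_faceMaps_subset hu
  obtain ⟨r₀, -, r₁, -, r₂, -, r₃, -, rfl⟩ := closure_faceMaps_subset hv
  obtain ⟨hl₀, -, -, -⟩ := leftInverse_of_map4 hvu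
  obtain ⟨hr₀, -, -, -⟩ := leftInverse_of_map4 huv
  obtain ⟨rfl, rfl, h₂, h₃⟩ : q₀ x = y ∧ q₁ x = z ∧ q₂ x = z ∧ q₃ x = z := by
    simpa [map4] using huP
  have h := mapsTo_cube hc hmin hu (mapsTo_cube hc hmin (map4_mem_closure_faceMaps_diag hv) hxy)
  simpa [map4, hl₀ x, hr₀ x, h₂, h₃] using h

theorem mem_cube_of_mem_relT (hc : Commute S T) (hmin : minimalST S T) (hd : distalST S T)
    {x b y : X} (h : (x, b, y, b) ∈ cube S T) : (x, y, y, y) ∈ cube S T :=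
  cube_glue hc hmin hd h (reflect_mem_cube h)

theorem mem_relS_inter_relT_iff (hc : Commute S T) (hmin : minimalST S T) (hd : distalST S T)
    (x y : X) : (x, y) ∈ relS S T ∩ relT S T ↔ (x, y, y, y) ∈ cube S T :=
  ⟨fun ⟨_, _, h⟩ => mem_cube_of_mem_relT hc hmin hd h, fun h => ⟨⟨y, h⟩, ⟨y, h⟩⟩⟩

end EllisFaceGroup

theorem stmt12 {X : Type*} [MetricSpace X] [CompactSpace X] (S T : X ≃ₜ X)
    (hST : ∀ x, S (T x) = T (S x)) (hmin : minimalST S T) (hd : distalST S T) :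
    IsClosed (relS S T ∩ relT S T) ∧
    Equivalence (fun x y : X => (x, y) ∈ relS S T ∩ relT S T) := by
  have hc : Commute S T := Homeomorph.ext hST
  refine ⟨(isClosed_relS S T).inter (isClosed_relT S T), ?_⟩
  simp only [mem_relS_inter_relT_iff hc hmin hd]
  exact ⟨diag_mem_cube, fun h => mem_cube_of_mem_relT hc hmin hd (swap_mem_cube h),
    cube_trans hc hmin hd⟩
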